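/- Let (a_n)_{n≥1} be a sequence of positive real numbers. The series ∑ a_n converges if and only if there exists a sequence (q_n)_{n≥1} of positive real numbers such that q_n·(n+1)/n − q_{n+1} ≥ (n+1)·a_{n+1} for all sufficiently large n. -/

import Mathlib

/-!
Write the Kummer weights as `q n = n * b n`. Then
`q n * ((n + 1) / n) - q (n + 1) = (n + 1) * (b n - b (n + 1))`, so the condition says exactly that
`a (n + 1) ≤ b n - b (n + 1)` eventually. With `b ≥ 0` the partial sums telescope and stay bounded,
giving convergence; conversely, for a convergent series the tails `b n = ∑_{m > n} a m` are
positive and turn the condition into an equality.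
-/

open Filter Finset

theorem summable_of_le_sub_succ {f b : ℕ → ℝ} (hf : ∀ n, 0 ≤ f n) (hb : ∀ n, 0 ≤ b n)
    (hfb : ∀ n, f n ≤ b n - b (n + 1)) : Summable f :=
  summable_of_sum_range_le hf fun n => calc
    ∑ i ∈ range n, f i ≤ ∑ i ∈ range n, (b i - b (i + 1)) := sum_le_sum fun i _ => hfb i
    _ = b 0 - b n := sum_range_sub' b n
    _ ≤ b 0 := sub_le_self _ (hb n)

theorem summable_of_eventually_le_sub_succ {f b : ℕ → ℝ} (hf : ∀ᶠ n in atTop, 0 ≤ f n)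
    (hb : ∀ᶠ n in atTop, 0 ≤ b n) (hfb : ∀ᶠ n in atTop, f n ≤ b n - b (n + 1)) :
    Summable f := by
  obtain ⟨N, hN⟩ := eventually_atTop.1 (hf.and (hb.and hfb))
  rw [← summable_nat_add_iff N]
  refine summable_of_le_sub_succ (b := fun n => b (n + N)) (fun n => (hN _ le_add_self).1)
    (fun n => (hN _ le_add_self).2.1) fun n => ?_
  simpa only [Nat.add_right_comm n 1 N] using (hN (n + N) le_add_self).2.2

theorem Summable.tsum_nat_add_eq_add_tsum_nat_add_succ {G : Type*} [AddCommGroup G]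
    [TopologicalSpace G] [IsTopologicalAddGroup G] [T2Space G] {f : ℕ → G} (hf : Summable f)
    (n : ℕ) : ∑' k, f (k + n) = f n + ∑' k, f (k + (n + 1)) := by
  rw [((summable_nat_add_iff n).2 hf).tsum_eq_zero_add, zero_add]
  simp only [add_assoc, add_comm 1 n]

theorem mul_add_one_div_sub_eq_mul_sub_div (q : ℕ → ℝ) {n : ℕ} (hn : n ≠ 0) :
    q n * ((n + 1 : ℝ) / n) - q (n + 1) =
      (n + 1 : ℝ) * (q n / n - q (n + 1) / ((n + 1 : ℕ) : ℝ)) := by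
  have hn' : (n : ℝ) ≠ 0 := Nat.cast_ne_zero.2 hn
  push_cast
  field_simp

theorem exists_kummer_weights_of_summable {f : ℕ → ℝ} (hf : ∀ n, 0 < f n) (hs : Summable f) :
    ∃ q : ℕ → ℝ, (∀ n, 1 ≤ n → 0 < q n) ∧
      ∀ n, 1 ≤ n → q n * ((n + 1 : ℝ) / n) - q (n + 1) = (n + 1 : ℝ) * f n := by
  set tail : ℕ → ℝ := fun n => ∑' k, f (k + n)
  have tail_pos (n : ℕ) : 0 < tail n :=
    ((summable_nat_add_iff n).2 hs).tsum_pos (fun k => (hf _).le) 0 (hf _)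
  refine ⟨fun n => n * tail n, fun n hn => mul_pos (by exact_mod_cast hn) (tail_pos n),
    fun n hn => ?_⟩
  have hn0 : n ≠ 0 := Nat.one_le_iff_ne_zero.1 hn
  have tail_eq : tail n = f n + tail (n + 1) := hs.tsum_nat_add_eq_add_tsum_nat_add_succ n
  rw [mul_add_one_div_sub_eq_mul_sub_div (fun n => n * tail n) hn0,
    mul_div_cancel_left₀ _ (by exact_mod_cast hn0), mul_div_cancel_left₀ _ (by positivity),
    tail_eq, add_sub_cancel_right]

theorem summable_of_kummer_weights {f q : ℕ → ℝ} (hf : ∀ n, 0 ≤ f n)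
    (hq : ∀ n, 1 ≤ n → 0 ≤ q n)
    (hfq : ∀ᶠ n : ℕ in atTop, (n + 1 : ℝ) * f n ≤ q n * ((n + 1 : ℝ) / n) - q (n + 1)) :
    Summable f := by
  refine summable_of_eventually_le_sub_succ (b := fun n => q n / n) (.of_forall hf)
    (eventually_atTop.2 ⟨1, fun n hn => div_nonneg (hq n hn) n.cast_nonneg⟩) ?_
  filter_upwards [hfq, eventually_ge_atTop 1] with n hn h1
  rw [mul_add_one_div_sub_eq_mul_sub_div _ (Nat.one_le_iff_ne_zero.1 h1)] at hn
  exact le_of_mul_le_mul_left hn (by positivity)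

/-- Olivier-type characterization of summability via the extended Kummer test. -/
theorem olivier_kummer (a : ℕ → ℝ) (ha : ∀ n, 1 ≤ n → 0 < a n) :
    Summable (fun n : ℕ => a (n + 1)) ↔
      ∃ q : ℕ → ℝ, (∀ n, 1 ≤ n → 0 < q n) ∧
        ∃ N : ℕ, ∀ n, N ≤ n →
          q n * ((n + 1 : ℝ) / n) - q (n + 1) ≥ (n + 1 : ℝ) * a (n + 1) := by
  have ha' (n : ℕ) : 0 < a (n + 1) := ha _ n.succ_pos
  constructor
  · intro hs
    obtain ⟨q, hq, hq_eq⟩ := exists_kummer_weights_of_summable ha' hs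
    exact ⟨q, hq, 1, fun n hn => (hq_eq n hn).ge⟩
  · rintro ⟨q, hq, hN⟩
    exact summable_of_kummer_weights (fun n => (ha' n).le) (fun n hn => (hq n hn).le)
      (eventually_atTop.2 hN)
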